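/- Define Cn_LM(K) := {α ∈ L• : R*_K ⊨ α}. Then for every knowledge base K ⊆ L• each of whose members is in normal form: (i) K ⊆ Cn_LM(K) (Inclusion); (ii) Cn0(K) ⊆ Cn_LM(K) (Ampliativeness); (iii) for every purely propositional α ∈ L, •⊤ → α ∈ Cn_LM(K) iff •⊤ → α ∈ Cn0(K) (Typical Entailment); and (iv) for every K' ⊆ L• each of whose members is in normal form, if K ⊆ K' ⊆ Cn_LM(K), then Cn_LM(K') = Cn_LM(K) (Cumulativity). -/

import Mathlib

attribute [local instance] Classical.propDecidable

universe u

/-- Sentences of Propositional Typicality Logic over atoms `P`. -/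
inductive PTL (P : Type u) : Type u
  | atom : P → PTL P
  | neg  : PTL P → PTL P
  | conj : PTL P → PTL P → PTL P
  | top  : PTL P
  | bot  : PTL P
  | typ  : PTL P → PTL P

namespace PTL

/-- Material implication, defined from `¬` and `∧`. -/
def impl {P : Type u} (a b : PTL P) : PTL P := neg (conj a (neg b))

/-- Disjunction, defined from `¬` and `∧`. -/
def disj {P : Type u} (a b : PTL P) : PTL P := neg (conj (neg a) (neg b))

/-- Purely propositional sentences: no occurrence of the typicality operator. -/
def IsProp {P : Type u} : PTL P → Prop
  | atom _ => True
  | neg a => IsProp a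
  | conj a b => IsProp a ∧ IsProp b
  | top => True
  | bot => True
  | typ _ => False

end PTL

/-- Propositional valuations. -/
abbrev Val (P : Type u) := P → Bool

/-- Satisfaction of a PTL sentence by a valuation, relative to a ranking
function `rho : Val P → ℕ∞`. -/
def satR {P : Type u} (rho : Val P → ℕ∞) : Val P → PTL P → Prop
  | v, PTL.atom p => v p = true
  | v, PTL.neg a => ¬ satR rho v a
  | v, PTL.conj a b => satR rho v a ∧ satR rho v b
  | _, PTL.top => True
  | _, PTL.bot => False
  | v, PTL.typ a => satR rho v a ∧ ∀ v', rho v' < rho v → ¬ satR rho v' a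

/-- The convexity property of ranking functions. -/
def RkConvex {P : Type u} (rho : Val P → ℕ∞) : Prop :=
  ∀ (v : Val P) (i : ℕ), rho v = (i : ℕ∞) → ∀ j : ℕ, j < i → ∃ v', rho v' = (j : ℕ∞)

/-- A ranked interpretation: a convex ranking function on valuations. -/
structure RankedInterp (P : Type u) where
  rk : Val P → ℕ∞
  convex : RkConvex rk

/-- `rho` is a ranked model of `a`: every possible valuation satisfies `a`. -/
def modelsR {P : Type u} (rho : Val P → ℕ∞) (a : PTL P) : Prop :=
  ∀ v, rho v < ⊤ → satR rho v a

/-- `R ⊨ a`. -/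
def RankedInterp.models {P : Type u} (R : RankedInterp P) (a : PTL P) : Prop :=
  modelsR R.rk a

/-- `R` is a ranked model of the knowledge base `K`. -/
def modelsSet {P : Type u} (R : RankedInterp P) (K : Set (PTL P)) : Prop :=
  ∀ a ∈ K, R.models a

/-- Ranked entailment consequences of `K`. -/
def Cn0 {P : Type u} (K : Set (PTL P)) : Set (PTL P) :=
  {a | ∀ R : RankedInterp P, modelsSet R K → R.models a}

/-- Conjunction of a list of sentences (empty conjunction is `⊤`). -/
def bigConj {P : Type u} : List (PTL P) → PTL P
  | [] => PTL.top
  | a :: l => PTL.conj a (bigConj l)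

/-- Disjunction of a list of sentences (empty disjunction is `⊥`). -/
def bigDisj {P : Type u} : List (PTL P) → PTL P
  | [] => PTL.bot
  | a :: l => PTL.disj a (bigDisj l)

/-- `a` is in normal form: `⋀_{i≤t} •θᵢ → (φ ∨ ⋁_{i≤s} •ψᵢ)` with all the
`θᵢ`, `φ`, `ψᵢ` purely propositional. -/
def InNormalForm {P : Type u} (a : PTL P) : Prop :=
  ∃ (ths : List (PTL P)) (phi : PTL P) (pss : List (PTL P)),
    (∀ t ∈ ths, t.IsProp) ∧ phi.IsProp ∧ (∀ s ∈ pss, s.IsProp) ∧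
    a = PTL.impl (bigConj (ths.map PTL.typ)) (PTL.disj phi (bigDisj (pss.map PTL.typ)))

/-- `R^1_S`: increase by one the rank of every valuation not in `S`. -/
noncomputable def bump {P : Type u} (rho : Val P → ℕ∞) (S : Set (Val P)) : Val P → ℕ∞ :=
  fun v => if v ∈ S then rho v else rho v + 1

/-- `R^∞_S`: make every valuation not in `S` impossible. -/
noncomputable def toInf {P : Type u} (rho : Val P → ℕ∞) (S : Set (Val P)) : Val P → ℕ∞ :=
  fun v => if v ∈ S then rho v else ⊤

/-- `⟦K⟧_rho`: the possible valuations satisfying every member of `K`. -/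
def KExt {P : Type u} (K : Set (PTL P)) (rho : Val P → ℕ∞) : Set (Val P) :=
  {v | rho v < ⊤ ∧ ∀ a ∈ K, satR rho v a}

/-- The sequence `R_i` of the LM-minimal construction. -/
noncomputable def Rseq {P : Type u} (K : Set (PTL P)) : ℕ → Val P → ℕ∞
  | 0 => fun _ => 0
  | i + 1 => bump (Rseq K i) (KExt K (Rseq K i))

/-- The sequence `S_i` of the LM-minimal construction:
`S_0 = ∅`, `S_{i+1} = ⟦K⟧_{R_i}`. -/
noncomputable def Sseq {P : Type u} (K : Set (PTL P)) : ℕ → Set (Val P)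
  | 0 => ∅
  | i + 1 => KExt K (Rseq K i)

/-- The least `i ≥ 1` with `S_i = S_{i-1}`. -/
noncomputable def stopIdx {P : Type u} (K : Set (PTL P)) : ℕ :=
  sInf {i : ℕ | 1 ≤ i ∧ Sseq K i = Sseq K (i - 1)}

/-- The LM-minimal ranked interpretation `R*_K := (R_{i-1})^∞_{S_i}`. -/
noncomputable def Rstar {P : Type u} (K : Set (PTL P)) : Val P → ℕ∞ :=
  toInf (Rseq K (stopIdx K - 1)) (Sseq K (stopIdx K))

/-- LM-entailment consequences of `K`: sentences holding in `R*_K`. -/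
def CnLM {P : Type u} (K : Set (PTL P)) : Set (PTL P) :=
  {a | modelsR (Rstar K) a}

/-!
All sentences involved have typicality depth at most one, so whether such a sentence holds at a
valuation `v` depends only on which valuations lie strictly below `v`. A valuation satisfying `K`
at stage `m` of the construction has rank at most `m`, while every valuation failing `K` sits at
the top rank `m`; bumping the top rank therefore leaves the valuations below `v` unchanged, so `v`
keeps its rank and keeps satisfying `K` at every later stage, and also in `R*_K`. If some stage
adds no new valuation, the next bump only rescales ranks and the construction stalls; hence every
rank below a rank used in `R*_K` is itself used, which is the convexity of `R*_K`. A valuation of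
rank `0` in some ranked model of `K` satisfies `K` at stage `0` and so keeps rank `0` in `R*_K`,
which gives typical entailment. Finally, a `K'` with `K ⊆ K' ⊆ Cn_LM(K)` selects the same layers
as `K` at every stage, hence produces the same `R*`.
-/

namespace PTL

variable {P : Type u}

def IsFlat : PTL P → Prop
  | atom _ => True
  | neg a => a.IsFlat
  | conj a b => a.IsFlat ∧ b.IsFlat
  | top => True
  | bot => True
  | typ a => a.IsProp

theorem IsProp.isFlat {a : PTL P} (h : a.IsProp) : a.IsFlat := by
  induction a with
  | neg a ih => exact ih h
  | conj a b iha ihb => exact ⟨iha h.1, ihb h.2⟩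
  | typ a => exact h.elim
  | _ => trivial

theorem isFlat_bigConj_map_typ {l : List (PTL P)} (h : ∀ t ∈ l, t.IsProp) :
    (bigConj (l.map typ)).IsFlat := by
  induction l with
  | nil => trivial
  | cons t l ih => exact ⟨h t (by simp), ih fun s hs => h s (by simp [hs])⟩

theorem isFlat_bigDisj_map_typ {l : List (PTL P)} (h : ∀ t ∈ l, t.IsProp) :
    (bigDisj (l.map typ)).IsFlat := by
  induction l with
  | nil => trivial
  | cons t l ih => exact ⟨h t (by simp), ih fun s hs => h s (by simp [hs])⟩

end PTL

open PTL

section Satisfaction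

variable {P : Type u}

theorem InNormalForm.isFlat {a : PTL P} (h : InNormalForm a) : a.IsFlat := by
  obtain ⟨ths, phi, pss, hths, hphi, hpss, rfl⟩ := h
  exact ⟨isFlat_bigConj_map_typ hths, hphi.isFlat, isFlat_bigDisj_map_typ hpss⟩

theorem satR_congr_of_isProp {a : PTL P} (ha : a.IsProp) (ρ ρ' : Val P → ℕ∞) (v : Val P) :
    satR ρ' v a ↔ satR ρ v a := by
  induction a generalizing v with
  | atom p => rfl
  | neg a ih => exact not_congr (ih ha v)
  | conj a b iha ihb => exact and_congr (iha ha.1 v) (ihb ha.2 v)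
  | top => rfl
  | bot => rfl
  | typ a => exact ha.elim

theorem satR_congr_of_isFlat {ρ ρ' : Val P → ℕ∞} {v : Val P}
    (h : ∀ u, ρ' u < ρ' v ↔ ρ u < ρ v) {a : PTL P} (ha : a.IsFlat) :
    satR ρ' v a ↔ satR ρ v a := by
  induction a with
  | atom p => rfl
  | neg a ih => exact not_congr (ih ha)
  | conj a b iha ihb => exact and_congr (iha ha.1) (ihb ha.2)
  | top => rfl
  | bot => rfl
  | typ a => simp only [satR, h, satR_congr_of_isProp ha ρ ρ']

theorem kext_congr {K : Set (PTL P)} (hK : ∀ a ∈ K, a.IsFlat) {ρ ρ' : Val P → ℕ∞}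
    (hfin : ∀ v, ρ' v < ⊤ ↔ ρ v < ⊤) (h : ∀ u v, ρ' u < ρ' v ↔ ρ u < ρ v) :
    KExt K ρ' = KExt K ρ := by
  ext v
  exact and_congr (hfin v) (forall₂_congr fun a ha => satR_congr_of_isFlat (h · v) (hK a ha))

theorem satR_impl {ρ : Val P → ℕ∞} {v : Val P} {a b : PTL P} :
    satR ρ v (impl a b) ↔ (satR ρ v a → satR ρ v b) := by
  simp [impl, satR]

theorem satR_typ_top {ρ : Val P → ℕ∞} {v : Val P} :
    satR ρ v (typ top) ↔ ∀ u, ¬ ρ u < ρ v := by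
  simp [satR]

theorem RkConvex.eq_zero_of_forall_not_lt {ρ : Val P → ℕ∞} (hρ : RkConvex ρ) {v : Val P}
    (hv : ρ v < ⊤) (hmin : ∀ u, ¬ ρ u < ρ v) : ρ v = 0 := by
  obtain ⟨i, hi⟩ := ENat.ne_top_iff_exists.mp hv.ne
  rcases Nat.eq_zero_or_pos i with rfl | hpos
  · exact hi.symm
  · obtain ⟨u, hu⟩ := hρ v i hi.symm 0 hpos
    exact (hmin u (by rw [hu, ← hi]; exact_mod_cast hpos)).elim

end Satisfaction

section RankFunctions

variable {P : Type u} {ρ : Val P → ℕ∞} {S : Set (Val P)}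

theorem bump_lt_iff_of_mem {v : Val P} (hv : v ∈ S) (hle : ∀ u ∉ S, ρ v ≤ ρ u) (u : Val P) :
    bump ρ S u < bump ρ S v ↔ ρ u < ρ v := by
  by_cases hu : u ∈ S
  · simp [bump, hu, hv]
  · simp only [bump, hu, hv, if_true, if_false]
    exact iff_of_false ((hle u hu).trans le_self_add).not_gt (hle u hu).not_gt

theorem toInf_lt_iff_of_mem {v : Val P} (hv : v ∈ S) (hle : ∀ u ∉ S, ρ v ≤ ρ u) (u : Val P) :
    toInf ρ S u < toInf ρ S v ↔ ρ u < ρ v := by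
  by_cases hu : u ∈ S
  · simp [toInf, hu, hv]
  · simp only [toInf, hu, hv, if_true, if_false]
    exact iff_of_false not_top_lt (hle u hu).not_gt

theorem bump_lt_bump_iff {c : ℕ∞} (hS : ∀ u ∈ S, ρ u < c) (hc : ∀ u ∉ S, ρ u = c)
    (u w : Val P) : bump ρ S u < bump ρ S w ↔ ρ u < ρ w := by
  by_cases hu : u ∈ S <;> by_cases hw : w ∈ S <;> simp only [bump, hu, hw, if_true, if_false]
  · rw [hc w hw]
    exact iff_of_true ((hS u hu).trans_le le_self_add) (hS u hu)
  · rw [hc u hu]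
    exact iff_of_false (le_self_add.trans_lt' (hS w hw)).not_gt (hS w hw).not_gt
  · rw [hc u hu, hc w hw]
    exact iff_of_false (lt_irrefl _) (lt_irrefl _)

end RankFunctions

section Construction

variable {P : Type u} {K : Set (PTL P)} {m n : ℕ} {u v : Val P}

theorem rseq_succ_of_mem (h : v ∈ KExt K (Rseq K m)) : Rseq K (m + 1) v = Rseq K m v :=
  if_pos h

theorem rseq_succ_of_notMem (h : v ∉ KExt K (Rseq K m)) :
    Rseq K (m + 1) v = Rseq K m v + 1 :=
  if_neg h

theorem rseq_le (K : Set (PTL P)) : ∀ (m : ℕ) (v : Val P), Rseq K m v ≤ m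
  | 0, _ => le_rfl
  | m + 1, v => by
    by_cases h : v ∈ KExt K (Rseq K m)
    · rw [rseq_succ_of_mem h, Nat.cast_succ]
      exact (rseq_le K m v).trans le_self_add
    · rw [rseq_succ_of_notMem h, Nat.cast_succ]
      exact add_le_add_left (rseq_le K m v) 1

theorem rseq_lt_top (K : Set (PTL P)) (m : ℕ) (v : Val P) : Rseq K m v < ⊤ :=
  (rseq_le K m v).trans_lt (ENat.natCast_lt_top m)

theorem kext_rseq_subset_succ_of_forall_notMem (hK : ∀ a ∈ K, a.IsFlat)
    (hm : ∀ u ∉ KExt K (Rseq K m), Rseq K m u = m) :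
    KExt K (Rseq K m) ⊆ KExt K (Rseq K (m + 1)) := fun v hv =>
  ⟨(rseq_succ_of_mem hv).symm ▸ hv.1, fun a ha =>
    (satR_congr_of_isFlat (bump_lt_iff_of_mem hv fun u hu => (hm u hu).symm ▸ rseq_le K m v)
      (hK a ha)).2 (hv.2 a ha)⟩

theorem rseq_eq_of_notMem_kext (hK : ∀ a ∈ K, a.IsFlat) :
    ∀ {m : ℕ} {u : Val P}, u ∉ KExt K (Rseq K m) → Rseq K m u = m
  | 0, _, _ => rfl
  | m + 1, u, hu => by
    have hum : u ∉ KExt K (Rseq K m) := fun h =>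
      hu (kext_rseq_subset_succ_of_forall_notMem hK (fun _ => rseq_eq_of_notMem_kext hK) h)
    rw [rseq_succ_of_notMem hum, rseq_eq_of_notMem_kext hK hum, Nat.cast_succ]

theorem rseq_le_of_notMem_kext (hK : ∀ a ∈ K, a.IsFlat) (hu : u ∉ KExt K (Rseq K m))
    (v : Val P) : Rseq K m v ≤ Rseq K m u :=
  (rseq_eq_of_notMem_kext hK hu).symm ▸ rseq_le K m v

theorem kext_rseq_mono (hK : ∀ a ∈ K, a.IsFlat) : Monotone fun m => KExt K (Rseq K m) :=
  monotone_nat_of_le_succ fun _ =>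
    kext_rseq_subset_succ_of_forall_notMem hK fun _ => rseq_eq_of_notMem_kext hK

theorem sseq_mono (hK : ∀ a ∈ K, a.IsFlat) : Monotone (Sseq K) :=
  monotone_nat_of_le_succ fun
    | 0 => Set.empty_subset _
    | m + 1 => kext_rseq_mono hK m.le_succ

theorem rseq_eq_of_notMem_sseq (hK : ∀ a ∈ K, a.IsFlat) :
    ∀ {m : ℕ}, u ∉ Sseq K m → Rseq K m u = m
  | 0, _ => rfl
  | m + 1, hu => by rw [rseq_succ_of_notMem hu, rseq_eq_of_notMem_kext hK hu, Nat.cast_succ]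

theorem rseq_lt_of_mem_sseq : ∀ {m : ℕ}, u ∈ Sseq K m → Rseq K m u < m
  | m + 1, hu => by
    rw [rseq_succ_of_mem hu]
    exact (rseq_le K m u).trans_lt (by exact_mod_cast m.lt_succ_self)

theorem rseq_eq_of_mem (hK : ∀ a ∈ K, a.IsFlat) (hv : v ∈ KExt K (Rseq K m)) (hmn : m ≤ n) :
    Rseq K n v = Rseq K m v := by
  induction n, hmn using Nat.le_induction with
  | base => rfl
  | succ n hmn ih => rw [rseq_succ_of_mem (kext_rseq_mono hK hmn hv), ih]

theorem rseq_lt_iff_of_le (hK : ∀ a ∈ K, a.IsFlat) (hv : v ∈ KExt K (Rseq K m)) (hmn : m ≤ n)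
    (u : Val P) : Rseq K n u < Rseq K n v ↔ Rseq K m u < Rseq K m v := by
  induction n, hmn using Nat.le_induction with
  | base => rfl
  | succ n hmn ih =>
    exact (bump_lt_iff_of_mem (kext_rseq_mono hK hmn hv)
      (fun w hw => rseq_le_of_notMem_kext hK hw v) u).trans ih

theorem rseq_lt_iff (hK : ∀ a ∈ K, a.IsFlat) (hm : v ∈ KExt K (Rseq K m))
    (hn : v ∈ KExt K (Rseq K n)) (u : Val P) :
    Rseq K n u < Rseq K n v ↔ Rseq K m u < Rseq K m v := by
  rcases le_total m n with hmn | hnm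
  · exact rseq_lt_iff_of_le hK hm hmn u
  · exact (rseq_lt_iff_of_le hK hn hnm u).symm

theorem kext_rseq_succ_eq (hK : ∀ a ∈ K, a.IsFlat) (h : KExt K (Rseq K m) = Sseq K m) :
    KExt K (Rseq K (m + 1)) = KExt K (Rseq K m) :=
  kext_congr hK (fun v => iff_of_true (rseq_lt_top K _ v) (rseq_lt_top K _ v))
    (bump_lt_bump_iff (fun _ hu => rseq_lt_of_mem_sseq (h ▸ hu))
      fun _ hu => rseq_eq_of_notMem_kext hK hu)

theorem kext_rseq_eq_sseq_of_le (hK : ∀ a ∈ K, a.IsFlat) (h : KExt K (Rseq K m) = Sseq K m)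
    (hmn : m ≤ n) : KExt K (Rseq K n) = Sseq K n := by
  induction n, hmn using Nat.le_induction with
  | base => exact h
  | succ n hmn ih => exact kext_rseq_succ_eq hK ih

theorem kext_rseq_eq_of_le (hK : ∀ a ∈ K, a.IsFlat) (h : KExt K (Rseq K m) = Sseq K m)
    (hmn : m ≤ n) : KExt K (Rseq K n) = KExt K (Rseq K m) := by
  induction n, hmn using Nat.le_induction with
  | base => rfl
  | succ n hmn ih => exact (kext_rseq_succ_eq hK (kext_rseq_eq_sseq_of_le hK h hmn)).trans ih

theorem exists_rseq_eq_of_lt (hK : ∀ a ∈ K, a.IsFlat) (hv : v ∈ KExt K (Rseq K m)) {j : ℕ}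
    (hj : (j : ℕ∞) < Rseq K m v) : ∃ u ∈ KExt K (Rseq K m), Rseq K m u = j := by
  have hjm : j ≤ m := by exact_mod_cast (hj.trans_le (rseq_le K m v)).le
  obtain ⟨u, hu, hus⟩ : ∃ u ∈ KExt K (Rseq K j), u ∉ Sseq K j := by
    by_contra! hstall
    have hfix : KExt K (Rseq K j) = Sseq K j :=
      (Set.Subset.antisymm hstall (sseq_mono hK j.le_succ))
    have hvj : v ∈ KExt K (Rseq K j) := kext_rseq_eq_of_le hK hfix hjm ▸ hv
    rw [rseq_eq_of_mem hK hvj hjm] at hj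
    exact (rseq_le K j v).not_gt hj
  exact ⟨u, kext_rseq_mono hK hjm hu,
    (rseq_eq_of_mem hK hu hjm).trans (rseq_eq_of_notMem_sseq hK hus)⟩

end Construction

section LMMinimal

variable {P : Type u} {K : Set (PTL P)} {v : Val P}

theorem exists_rstar_eq [Finite P] (hK : ∀ a ∈ K, a.IsFlat) :
    ∃ p, KExt K (Rseq K p) = Sseq K p ∧ Rstar K = toInf (Rseq K p) (KExt K (Rseq K p)) := by
  obtain ⟨n, hn⟩ := WellFoundedGT.monotone_chain_condition ⟨Sseq K, sseq_mono hK⟩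
  have hne : {i | 1 ≤ i ∧ Sseq K i = Sseq K (i - 1)}.Nonempty :=
    ⟨n + 1, by omega, (hn (n + 1) n.le_succ).symm⟩
  obtain ⟨hstop, hfix⟩ : 1 ≤ stopIdx K ∧ Sseq K (stopIdx K) = Sseq K (stopIdx K - 1) :=
    Nat.sInf_mem hne
  obtain ⟨p, hp⟩ : ∃ p, stopIdx K = p + 1 := ⟨_, (Nat.sub_add_cancel hstop).symm⟩
  rw [hp, Nat.add_sub_cancel] at hfix
  refine ⟨p, hfix, ?_⟩
  · simp [Rstar, hp, Sseq]

theorem satR_rstar_iff {p m : ℕ} (hK : ∀ a ∈ K, a.IsFlat)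
    (hp : Rstar K = toInf (Rseq K p) (KExt K (Rseq K p)))
    (hvp : v ∈ KExt K (Rseq K p)) (hvm : v ∈ KExt K (Rseq K m)) {a : PTL P} (ha : a.IsFlat) :
    satR (Rstar K) v a ↔ satR (Rseq K m) v a := by
  rw [hp]
  refine satR_congr_of_isFlat (fun u => ?_) ha
  rw [toInf_lt_iff_of_mem hvp (fun w hw => rseq_le_of_notMem_kext hK hw v)]
  exact rseq_lt_iff hK hvm hvp u

theorem rstar_models [Finite P] (hK : ∀ a ∈ K, a.IsFlat) : ∀ a ∈ K, modelsR (Rstar K) a := by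
  obtain ⟨p, -, hp⟩ := exists_rstar_eq hK
  intro a ha v hv
  have hvp : v ∈ KExt K (Rseq K p) := by
    by_contra h
    simp [hp, toInf, h] at hv
  exact (satR_rstar_iff hK hp hvp hvp (hK a ha)).2 (hvp.2 a ha)

theorem rstar_convex [Finite P] (hK : ∀ a ∈ K, a.IsFlat) : RkConvex (Rstar K) := by
  obtain ⟨p, -, hp⟩ := exists_rstar_eq hK
  intro v i hvi j hji
  rw [hp] at hvi ⊢
  by_cases hv : v ∈ KExt K (Rseq K p)
  · simp only [toInf, hv, if_true] at hvi
    obtain ⟨u, hu, hru⟩ := exists_rseq_eq_of_lt hK hv (j := j) (by rw [hvi]; exact_mod_cast hji)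
    exact ⟨u, by simp only [toInf, if_pos hu]; exact hru⟩
  · simp [toInf, hv] at hvi

theorem rstar_eq_zero [Finite P] (hK : ∀ a ∈ K, a.IsFlat) (R : RankedInterp P)
    (hR : modelsSet R K) (hv : R.rk v = 0) : Rstar K v = 0 := by
  obtain ⟨p, -, hp⟩ := exists_rstar_eq hK
  have hv0 : v ∈ KExt K (Rseq K 0) := by
    have hbelow (u : Val P) : Rseq K 0 u < Rseq K 0 v ↔ R.rk u < R.rk v := by
      simp [Rseq, hv]
    exact ⟨ENat.natCast_lt_top 0, fun a ha =>
      (satR_congr_of_isFlat hbelow (hK a ha)).2 (hR a ha v (by simp [hv]))⟩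
  have hvp := kext_rseq_mono hK p.zero_le hv0
  simp [hp, toInf, hvp, rseq_eq_of_mem hK hv0 p.zero_le, Rseq]

theorem typ_top_impl_mem_cn0 [Finite P] (hK : ∀ a ∈ K, a.IsFlat) {a : PTL P} (ha : a.IsProp)
    (h : impl (typ top) a ∈ CnLM K) : impl (typ top) a ∈ Cn0 K := by
  intro R hR v hv
  rw [satR_impl]
  intro htyp
  have hstar : Rstar K v = 0 :=
    rstar_eq_zero hK R hR (R.convex.eq_zero_of_forall_not_lt hv (satR_typ_top.1 htyp))
  have hstar_a := satR_impl.1 (h v (hstar ▸ ENat.natCast_lt_top 0))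
    (satR_typ_top.2 fun u => by simp [hstar])
  exact (satR_congr_of_isProp ha (Rstar K) R.rk v).2 hstar_a

theorem rstar_congr {K' : Set (PTL P)}
    (h : ∀ m, KExt K' (Rseq K m) = KExt K (Rseq K m)) : Rstar K' = Rstar K := by
  have hR : Rseq K' = Rseq K := funext fun m => by
    induction m with
    | zero => rfl
    | succ m ih =>
      change bump (Rseq K' m) (KExt K' (Rseq K' m)) = bump (Rseq K m) (KExt K (Rseq K m))
      rw [ih, h m]
  have hS : Sseq K' = Sseq K := funext fun
    | 0 => rfl
    | m + 1 => (congrArg (KExt K') (congrFun hR m)).trans (h m)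
  unfold Rstar stopIdx
  rw [hS, hR]

theorem rstar_eq_of_subset [Finite P] {K' : Set (PTL P)} (hK : ∀ a ∈ K, a.IsFlat)
    (hK' : ∀ a ∈ K', a.IsFlat) (hKK' : K ⊆ K') (hK'K : ∀ b ∈ K', modelsR (Rstar K) b) :
    Rstar K' = Rstar K := by
  obtain ⟨p, hfix, hp⟩ := exists_rstar_eq hK
  refine rstar_congr fun m => Set.Subset.antisymm
    (fun v hv => ⟨hv.1, fun a ha => hv.2 a (hKK' ha)⟩) fun v hv => ?_
  have hvp : v ∈ KExt K (Rseq K p) := by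
    rcases le_total m p with hmp | hpm
    · exact kext_rseq_mono hK hmp hv
    · exact kext_rseq_eq_of_le hK hfix hpm ▸ hv
  have hfin : Rstar K v < ⊤ := by simp [hp, toInf, hvp, rseq_lt_top]
  exact ⟨hv.1, fun b hb => (satR_rstar_iff hK hp hvp hv (hK' b hb)).1 (hK'K b hb v hfin)⟩

end LMMinimal

theorem ptl_CnLM_properties_general {P : Type u} [Fintype P]
    (K : Set (PTL P)) (hK : ∀ a ∈ K, InNormalForm a) :
    K ⊆ CnLM K ∧
    Cn0 K ⊆ CnLM K ∧
    (∀ a : PTL P, a.IsProp →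
      (PTL.impl (PTL.typ PTL.top) a ∈ CnLM K ↔
        PTL.impl (PTL.typ PTL.top) a ∈ Cn0 K)) ∧
    (∀ K' : Set (PTL P), (∀ a ∈ K', InNormalForm a) →
      K ⊆ K' → K' ⊆ CnLM K → CnLM K' = CnLM K) := by
  have hKflat : ∀ a ∈ K, a.IsFlat := fun a ha => (hK a ha).isFlat
  have hamp : Cn0 K ⊆ CnLM K := fun a ha =>
    ha ⟨Rstar K, rstar_convex hKflat⟩ (rstar_models hKflat)
  refine ⟨rstar_models hKflat, hamp, fun a ha => ⟨typ_top_impl_mem_cn0 hKflat ha, (hamp ·)⟩, ?_⟩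
  intro K' hK' hKK' hK'K
  have hstar := rstar_eq_of_subset hKflat (fun a ha => (hK' a ha).isFlat) hKK' hK'K
  simp only [CnLM, hstar]

/-- LM-entailment satisfies Inclusion, Ampliativeness, Typical
Entailment and Cumulativity (for normal-form knowledge bases). -/
theorem ptl_CnLM_properties {P : Type u} [Fintype P] [DecidableEq P]
    (K : Set (PTL P)) (hK : ∀ a ∈ K, InNormalForm a) :
    K ⊆ CnLM K ∧
    Cn0 K ⊆ CnLM K ∧
    (∀ a : PTL P, a.IsProp →
      (PTL.impl (PTL.typ PTL.top) a ∈ CnLM K ↔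
        PTL.impl (PTL.typ PTL.top) a ∈ Cn0 K)) ∧
    (∀ K' : Set (PTL P), (∀ a ∈ K', InNormalForm a) →
      K ⊆ K' → K' ⊆ CnLM K → CnLM K' = CnLM K) :=
  ptl_CnLM_properties_general K hK
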